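/- Let L be a first-order language all of whose symbols are function symbols of arity ≥ 1, containing at least one binary function symbol, and let 𝒜 be an orderly L-algebra. Then 𝒜 is weakly Ramsey if and only if for every X ⊆ ‖𝒜‖ there exists a reduction ℬ of 𝒜 that is pre-homogeneous for X, meaning: for all orderly terms t₁ and t₂ in which exactly the same variables occur, ℬ(t₁) ∈ X if and only if ℬ(t₂) ∈ X. -/

import Mathlib

open Function Set

universe u v w

/-- Terms of a purely functional first-order language whose function symbols
of arity `n` form the type `F n`, with variables indexed by `ℕ`. -/
inductive Tm (F : ℕ → Type u) : Type u
  | var : ℕ → Tm F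
  | func : {n : ℕ} → F n → (Fin n → Tm F) → Tm F

namespace Tm

variable {F : ℕ → Type u} {A : Type v} {β : Type w}

/-- The list of (indices of) variables occurring in a term, from left to right. -/
def varList : Tm F → List ℕ
  | .var i => [i]
  | .func (n := n) _ ts => (List.finRange n).flatMap fun i => (ts i).varList

/-- A term is *orderly* if the indices of the variables occurring in it,
read from left to right, are strictly increasing. -/
def Orderly (t : Tm F) : Prop := t.varList.Chain' (· < ·)

/-- `TermLT s t` iff the index of the last variable of `s` is less than the
index of the first variable of `t`. -/
def TermLT (s t : Tm F) : Prop :=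
  ∃ i j, s.varList.getLast? = some i ∧ t.varList.head? = some j ∧ i < j

/-- An infinite sequence of orderly terms is *admissible* iff it is increasing
with respect to `TermLT`. -/
def Admissible (ts : ℕ → Tm F) : Prop :=
  (∀ i, (ts i).Orderly) ∧ ∀ i, TermLT (ts i) (ts (i + 1))

/-- `s.subst σ` replaces each variable `vᵢ` in `s` by `σ i`. -/
def subst (σ : ℕ → Tm F) : Tm F → Tm F
  | .var i => σ i
  | .func f ts => .func f fun i => (ts i).subst σ

/-- Interpretation of a term in a structure with underlying set `A` whose
interpretation of the function symbols is `I`, under the assignment `a`. -/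
def realize (I : ∀ n, F n → (Fin n → A) → A) (a : ℕ → A) : Tm F → A
  | .var i => a i
  | .func (n := n) f ts => I n f fun i => (ts i).realize I a

end Tm

section General

variable {F : ℕ → Type u} {A : Type v} {β : Type w}

/-- `b` is a reduction of `a` (with respect to the algebra `(A, I)`). -/
def SeqReduction (I : ∀ n, F n → (Fin n → A) → A) (b a : ℕ → A) : Prop :=
  ∃ ts : ℕ → Tm F, Tm.Admissible ts ∧ ∀ i, b i = (ts i).realize I a

/-- The set of finite reductions of `a`. -/
def FR (I : ∀ n, F n → (Fin n → A) → A) (a : ℕ → A) : Set A :=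
  { x | ∃ t : Tm F, t.Orderly ∧ x = t.realize I a }

/-- `(A, I)` is a Ramsey algebra. -/
def RamseyAlg (I : ∀ n, F n → (Fin n → A) → A) : Prop :=
  ∀ (a : ℕ → A) (X : Set A),
    ∃ b, SeqReduction I b a ∧ (FR I b ⊆ X ∨ FR I b ∩ X = ∅)

/-- `(A, I)` is Ramsey below `a`. -/
def RamseyBelow (I : ∀ n, F n → (Fin n → A) → A) (a : ℕ → A) : Prop :=
  ∀ b, SeqReduction I b a → ∀ X : Set A,
    ∃ c, SeqReduction I c b ∧ (FR I c ⊆ X ∨ FR I c ∩ X = ∅)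

/-- An increasing tuple `t₁ < t₂ < ⋯ < tₙ` of orderly terms. -/
def OrdTuple {n : ℕ} (t : Fin n → Tm F) : Prop :=
  (∀ i, (t i).Orderly) ∧ ∀ i j : Fin n, i < j → Tm.TermLT (t i) (t j)

/-- `𝒜` (as a function on orderly terms) is an orderly algebra. -/
def IsOrderlyAlg (𝒜 : Tm F → β) : Prop :=
  ∀ (n : ℕ) (f : F n) (t t' : Fin n → Tm F), OrdTuple t → OrdTuple t' →
    (∀ k, 𝒜 (t k) = 𝒜 (t' k)) → 𝒜 (.func f t) = 𝒜 (.func f t')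

/-- The universe of an orderly algebra: its range on orderly terms. -/
def OAUniv (𝒜 : Tm F → β) : Set β := 𝒜 '' { t | t.Orderly }

/-- `ℬ` is a reduction of the orderly algebra `𝒜` (as functions on orderly terms). -/
def OAReduction (ℬ 𝒜 : Tm F → β) : Prop :=
  ∃ ts : ℕ → Tm F, Tm.Admissible ts ∧ ∀ s : Tm F, s.Orderly → ℬ s = 𝒜 (s.subst ts)

/-- `ℬ` is homogeneous for `X`. -/
def Homog (ℬ : Tm F → β) (X : Set β) : Prop :=
  OAUniv ℬ ⊆ X ∨ OAUniv ℬ ∩ X = ∅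

/-- An orderly algebra is weakly Ramsey. -/
def WeaklyRamseyOA (𝒜 : Tm F → β) : Prop :=
  ∀ X ⊆ OAUniv 𝒜, ∃ ℬ, OAReduction ℬ 𝒜 ∧ Homog ℬ X

/-- An orderly algebra is Ramsey. -/
def RamseyOA (𝒜 : Tm F → β) : Prop :=
  ∀ ℬ, OAReduction ℬ 𝒜 → ∀ X ⊆ OAUniv 𝒜, ∃ 𝒞, OAReduction 𝒞 ℬ ∧ Homog 𝒞 X

/-- The orderly algebra induced from the algebra `(A, I)` by the sequence `a`. -/
def inducedOA (I : ∀ n, F n → (Fin n → A) → A) (a : ℕ → A) : Tm F → A :=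
  fun t => t.realize I a

/-- `[FR(c)]ⁿ_<` : increasing `n`-tuples of finite reductions of `c`. -/
def FRtuple (I : ∀ n, F n → (Fin n → A) → A) (n : ℕ) (c : ℕ → A) : Set (Fin n → A) :=
  { x | ∃ t : Fin n → Tm F, OrdTuple t ∧ ∀ i, x i = (t i).realize I c }

/-- `‖𝒞‖ⁿ_<` for an orderly algebra `𝒞`. -/
def OATuple (n : ℕ) (𝒞 : Tm F → β) : Set (Fin n → β) :=
  { x | ∃ t : Fin n → Tm F, OrdTuple t ∧ ∀ i, x i = 𝒞 (t i) }

/-- The basic set `[n, a]` of the preorder with approximations `(ᵂA, ≤)`. -/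
def Approx (I : ∀ n, F n → (Fin n → A) → A) (n : ℕ) (a : ℕ → A) : Set (ℕ → A) :=
  { b | SeqReduction I b a ∧ ∀ i < n, b i = a i }

/-- The natural topology on `ᵂA`, generated by the sets `[n, a]`. -/
def natTop (I : ∀ n, F n → (Fin n → A) → A) : TopologicalSpace (ℕ → A) :=
  TopologicalSpace.generateFrom { S | ∃ n a, S = Approx I n a }

/-- A subset `X ⊆ ᵂA` is Ramsey. -/
def RamseySet (I : ∀ n, F n → (Fin n → A) → A) (X : Set (ℕ → A)) : Prop :=
  ∀ (n : ℕ) (a : ℕ → A), ∃ b ∈ Approx I n a,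
    Approx I n b ⊆ X ∨ Approx I n b ∩ X = ∅

/-- `X` has the property of Baire in the natural topology:
its symmetric difference with some open set is meager. -/
def HasBaireProperty (I : ∀ n, F n → (Fin n → A) → A) (X : Set (ℕ → A)) : Prop :=
  ∃ U : Set (ℕ → A), @IsOpen _ (natTop I) U ∧ @IsMeagre _ (natTop I) (symmDiff X U)

end General

/-- The language with a single binary function symbol. -/
inductive BinF : ℕ → Type
  | f : BinF 2

/-- Application of the binary function symbol: the term `f s t`. -/
def fapp (s t : Tm BinF) : Tm BinF := .func BinF.f ![s, t]

/-- The interpretation of the single binary function symbol by a binary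
operation `g` on `A`. -/
def binI {A : Type v} (g : A → A → A) : ∀ n, BinF n → (Fin n → A) → A
  | _, BinF.f, args => g (args 0) (args 1)

/-- The pair `(tˣ, tʸ)`: `(vᵢˣ, vᵢʸ) = (v_{2i}, v_{2i+1})` and
`((f s t)ˣ, (f s t)ʸ) = (f sˣ sʸ, f tˣ tʸ)`. -/
def xyPair : Tm BinF → Tm BinF × Tm BinF
  | .var i => (.var (2 * i), .var (2 * i + 1))
  | .func BinF.f ts =>
      (fapp (xyPair (ts 0)).1 (xyPair (ts 0)).2, fapp (xyPair (ts 1)).1 (xyPair (ts 1)).2)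

/-- The orderly algebra `♯𝒜`, `♯𝒜(t) = (𝒜(tˣ), 𝒜(tʸ))`. -/
def sharpOA {β : Type w} (𝒜 : Tm BinF → β) : Tm BinF → β × β :=
  fun t => (𝒜 (xyPair t).1, 𝒜 (xyPair t).2)

/-! Homogeneity trivially implies pre-homogeneity. Conversely, if `ℬ` is pre-homogeneous for `X`,
whether `ℬ t ∈ X` depends only on the variables of `t`, so it 2-colours the positive integers `x`
through the binary digits of `x`. Hindman's theorem yields `b` with monochromatic finite sums, and a
pigeonhole argument modulo powers of `2` groups `b` into disjoint blocks whose sums `D₀, D₁, …` have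
their binary digits in successive disjoint intervals. Substituting for `vₙ` a term whose variables
are the binary digits of `Dₙ` gives a reduction in which every orderly `s` has exactly the variables
of the term attached to the finite sum `∑_{vₙ ∈ s} Dₙ` of `b`; hence this reduction is homogeneous.
-/

namespace Tm

variable {F : ℕ → Type u}

theorem orderly_iff_pairwise {t : Tm F} : t.Orderly ↔ t.varList.Pairwise (· < ·) :=
  List.isChain_iff_pairwise

theorem varList_ne_nil [IsEmpty (F 0)] (t : Tm F) : t.varList ≠ [] := by
  induction t with
  | var i => simp [varList]
  | @func n f ts ih =>
    cases n with
    | zero => exact isEmptyElim f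
    | succ n =>
      obtain ⟨x, hx⟩ := List.exists_mem_of_ne_nil _ (ih 0)
      exact List.ne_nil_of_mem (List.mem_flatMap.2 ⟨0, List.mem_finRange 0, hx⟩)

theorem varList_subst (σ : ℕ → Tm F) (t : Tm F) :
    (t.subst σ).varList = t.varList.flatMap fun i => (σ i).varList := by
  induction t with
  | var i => simp [subst, varList]
  | func f ts ih => simp only [subst, varList, List.flatMap_assoc, ih]

theorem subst_subst (σ τ : ℕ → Tm F) (t : Tm F) :
    (t.subst σ).subst τ = t.subst fun i => (σ i).subst τ := by
  induction t with
  | var i => rfl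
  | func f ts ih => simp only [subst, ih]

theorem termLT_iff [IsEmpty (F 0)] {s t : Tm F} (hs : s.Orderly) (ht : t.Orderly) :
    TermLT s t ↔ ∀ i ∈ s.varList, ∀ j ∈ t.varList, i < j := by
  constructor
  · rintro ⟨a, b, ha, hb, hab⟩ i hi j hj
    obtain ⟨l, hl⟩ := List.getLast?_eq_some_iff.1 ha
    obtain ⟨r, hr⟩ := List.head?_eq_some_iff.1 hb
    have hia : i ≤ a := by
      rw [orderly_iff_pairwise, hl, List.pairwise_append] at hs
      rw [hl, List.mem_append, List.mem_singleton] at hi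
      rcases hi with hi | rfl
      · exact (hs.2.2 i hi a (List.mem_singleton_self a)).le
      · rfl
    have hbj : b ≤ j := by
      rw [orderly_iff_pairwise, hr, List.pairwise_cons] at ht
      rw [hr, List.mem_cons] at hj
      rcases hj with rfl | hj
      · rfl
      · exact (ht.1 j hj).le
    omega
  · intro h
    have ha := List.getLast?_eq_some_getLast (varList_ne_nil s)
    have hb := List.head?_eq_some_head (varList_ne_nil t)
    exact ⟨_, _, ha, hb, h _ (List.mem_of_mem_getLast? ha) _ (List.mem_of_mem_head? hb)⟩

theorem Admissible.lt_of_mem_varList [IsEmpty (F 0)] {ts : ℕ → Tm F} (h : Admissible ts)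
    {m n : ℕ} (hmn : m < n) : ∀ i ∈ (ts m).varList, ∀ j ∈ (ts n).varList, i < j := by
  induction n, hmn using Nat.le_induction with
  | base => exact (termLT_iff (h.1 m) (h.1 (m + 1))).1 (h.2 m)
  | succ n hmn ih =>
    intro i hi j hj
    obtain ⟨k, hk⟩ := List.exists_mem_of_ne_nil _ (varList_ne_nil (ts n))
    exact (ih i hi k hk).trans ((termLT_iff (h.1 n) (h.1 (n + 1))).1 (h.2 n) k hk j hj)

theorem Orderly.subst [IsEmpty (F 0)] {s : Tm F} {ts : ℕ → Tm F} (hs : s.Orderly)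
    (hts : Admissible ts) : (s.subst ts).Orderly := by
  rw [orderly_iff_pairwise, varList_subst, List.pairwise_flatMap]
  exact ⟨fun i _ => orderly_iff_pairwise.1 (hts.1 i),
    (orderly_iff_pairwise.1 hs).imp fun hmn => hts.lt_of_mem_varList hmn⟩

theorem Admissible.subst [IsEmpty (F 0)] {ts us : ℕ → Tm F} (hts : Admissible ts)
    (hus : Admissible us) : Admissible fun n => (ts n).subst us := by
  refine ⟨fun n => (hts.1 n).subst hus, fun n => ?_⟩
  rw [termLT_iff ((hts.1 n).subst hus) ((hts.1 (n + 1)).subst hus)]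
  simp only [varList_subst, List.mem_flatMap]
  rintro i ⟨a, ha, hi⟩ j ⟨b, hb, hj⟩
  have hab := (termLT_iff (hts.1 n) (hts.1 (n + 1))).1 (hts.2 n) a ha b hb
  exact hus.lt_of_mem_varList hab i hi j hj

end Tm

section OrderlyAlgebra

variable {F : ℕ → Type u} {β : Type w}

theorem OAReduction.trans [IsEmpty (F 0)] {𝒜 ℬ 𝒞 : Tm F → β} (h𝒞 : OAReduction 𝒞 ℬ)
    (hℬ : OAReduction ℬ 𝒜) : OAReduction 𝒞 𝒜 := by
  obtain ⟨ts, hts, h𝒞⟩ := h𝒞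
  obtain ⟨us, hus, hℬ⟩ := hℬ
  refine ⟨fun n => (ts n).subst us, hts.subst hus, fun s hs => ?_⟩
  rw [h𝒞 s hs, hℬ _ (hs.subst hts), Tm.subst_subst]

theorem homog_iff {ℬ : Tm F → β} {X : Set β} :
    Homog ℬ X ↔ ∀ s t : Tm F, s.Orderly → t.Orderly → (ℬ s ∈ X ↔ ℬ t ∈ X) := by
  constructor
  · rintro (h | h) s t hs ht
    · exact iff_of_true (h ⟨s, hs, rfl⟩) (h ⟨t, ht, rfl⟩)
    · exact iff_of_false (fun hX => h.subset ⟨⟨s, hs, rfl⟩, hX⟩)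
        (fun hX => h.subset ⟨⟨t, ht, rfl⟩, hX⟩)
  · intro h
    by_cases hX : ∃ s : Tm F, s.Orderly ∧ ℬ s ∈ X
    · obtain ⟨s, hs, hsX⟩ := hX
      exact Or.inl (by rintro _ ⟨t, ht, rfl⟩; exact (h s t hs ht).1 hsX)
    · refine Or.inr (Set.eq_empty_of_forall_notMem ?_)
      rintro _ ⟨⟨t, ht, rfl⟩, htX⟩
      exact hX ⟨t, ht, htX⟩

end OrderlyAlgebra

namespace Nat

theorem bitIndices_ne_nil {x : ℕ} (hx : 0 < x) : x.bitIndices ≠ [] := by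
  intro h
  have := sum_map_two_pow_bitIndices x
  simp [h] at this
  omega

theorem bitIndices_sum_map {D : ℕ → ℕ} {l : List ℕ}
    (hl : l.Pairwise fun m n => ∀ i ∈ (D m).bitIndices, ∀ j ∈ (D n).bitIndices, i < j) :
    (l.map D).sum.bitIndices = l.flatMap fun n => (D n).bitIndices := by
  have hsorted : (l.flatMap fun n => (D n).bitIndices).SortedLT :=
    List.sortedLT_iff_pairwise.2
      (List.pairwise_flatMap.2 ⟨fun n _ => bitIndices_sorted.pairwise, hl⟩)
  rw [← bitIndices_sum_map_two_pow hsorted, List.map_flatMap]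
  congr 1
  clear hl hsorted
  induction l with
  | nil => rfl
  | cons n l ih => simp [ih]

theorem le_and_lt_of_mem_bitIndices {x e e' i : ℕ} (hdvd : 2 ^ e ∣ x) (hlt : x < 2 ^ e')
    (hi : i ∈ x.bitIndices) : e ≤ i ∧ i < e' := by
  rw [mem_bitIndices] at hi
  constructor
  · obtain ⟨y, rfl⟩ := hdvd
    rw [testBit_two_pow_mul, Bool.and_eq_true, decide_eq_true_iff] at hi
    exact hi.1
  · exact (Nat.pow_lt_pow_iff_right (by norm_num)).1 ((ge_two_pow_of_testBit hi).trans_lt hlt)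

end Nat

theorem exists_dvd_sum_Ico (b : ℕ → ℕ) {q : ℕ} (hq : 0 < q) (k : ℕ) :
    ∃ j j', k ≤ j ∧ j < j' ∧ q ∣ ∑ i ∈ Finset.Ico j j', b i := by
  obtain ⟨j, hj, j', hj', hne, heq⟩ := Finset.exists_ne_map_eq_of_card_lt_of_maps_to
    (s := Finset.Icc k (k + q)) (t := Finset.range q) (by simp; omega)
    (f := fun j => (∑ i ∈ Finset.range j, b i) % q)
    (fun j _ => Finset.mem_range.2 (Nat.mod_lt _ hq))
  wlog hlt : j < j' generalizing j j'
  · exact this j' hj' j hj hne.symm heq.symm (by omega)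
  refine ⟨j, j', (Finset.mem_Icc.1 hj).1, hlt, ?_⟩
  have hsplit : ∑ i ∈ Finset.range j, b i + ∑ i ∈ Finset.Ico j j', b i ≡
      ∑ i ∈ Finset.range j, b i + 0 [MOD q] := by
    rw [Finset.sum_range_add_sum_Ico b hlt.le, add_zero]
    exact heq.symm
  exact Nat.modEq_zero_iff_dvd.1 (Nat.ModEq.add_left_cancel' _ hsplit)

theorem exists_block_sums_bitIndices_lt (b : ℕ → ℕ) :
    ∃ D : ℕ → ℕ, (∀ s : Finset ℕ, s.Nonempty →
        ∃ t : Finset ℕ, t.Nonempty ∧ ∑ n ∈ s, D n = ∑ i ∈ t, b i) ∧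
      ∀ m n, m < n → ∀ i ∈ (D m).bitIndices, ∀ j ∈ (D n).bitIndices, i < j := by
  choose J J' hJ hJJ' hdvd using fun p : ℕ × ℕ => exists_dvd_sum_Ico b (Nat.two_pow_pos p.2) p.1
  set block : ℕ × ℕ → Finset ℕ := fun p => Finset.Ico (J p) (J' p)
  -- In state `(k, e)` the next block starts at an index `≥ k` and has sum divisible by `2 ^ e`;
  -- raising `e` by that sum puts the binary digits of all later blocks above those of this one.
  set step : ℕ × ℕ → ℕ × ℕ := fun p => (J' p, p.2 + ∑ i ∈ block p, b i)
  set st : ℕ → ℕ × ℕ := fun n => step^[n] (0, 0)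
  have hst (n : ℕ) : st (n + 1) = step (st n) := Function.iterate_succ_apply' step n (0, 0)
  have hJ'J (n : ℕ) : J' (st n) ≤ J (st (n + 1)) := by
    rw [hst n]
    exact hJ (step (st n))
  have hJmono : Monotone fun n => J (st n) :=
    monotone_nat_of_le_succ fun n => (hJJ' (st n)).le.trans (hJ'J n)
  have hemono : Monotone fun n => (st n).2 := monotone_nat_of_le_succ fun n => by
    rw [hst n]
    exact Nat.le_add_right _ _
  refine ⟨fun n => ∑ i ∈ block (st n), b i, fun s hs => ?_, fun m n hmn i hi j hj => ?_⟩
  · have hsep {m n : ℕ} (h : m < n) : Disjoint (block (st m)) (block (st n)) := by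
      have hle : J' (st m) ≤ J (st n) := (hJ'J m).trans (hJmono h)
      refine Finset.disjoint_left.2 fun i hm hn => ?_
      simp only [block, Finset.mem_Ico] at hm hn
      omega
    have hdisj : (s : Set ℕ).PairwiseDisjoint fun n => block (st n) := fun m _ n _ hmn =>
      (lt_or_gt_of_ne hmn).elim hsep fun h => (hsep h).symm
    exact ⟨s.biUnion fun n => block (st n), hs.biUnion fun n _ =>
      Finset.nonempty_Ico.2 (hJJ' (st n)), (Finset.sum_biUnion hdisj).symm⟩
  · have hlt (n : ℕ) : ∑ i ∈ block (st n), b i < 2 ^ (st (n + 1)).2 := by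
      rw [hst n]
      exact Nat.lt_two_pow_self.trans_le (Nat.pow_le_pow_right two_pos (Nat.le_add_left _ _))
    have hi := Nat.le_and_lt_of_mem_bitIndices (hdvd (st m)) (hlt m) hi
    have hj := Nat.le_and_lt_of_mem_bitIndices (hdvd (st n)) (hlt n) hj
    have he : (st (m + 1)).2 ≤ (st n).2 := hemono hmn
    omega

theorem Hindman.pos_of_mem_FS {a : Stream' ℕ} {x : ℕ} (hx : x ∈ FS a) (ha : ∀ n, 0 < a.get n) :
    0 < x := by
  induction hx with
  | head' a => exact ha 0
  | tail' a m _ ih => exact ih fun n => ha (n + 1)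
  | cons' a m _ ih => exact Nat.add_pos_left (ha 0) _

theorem Hindman.exists_FS_pos_forall_iff (Q : ℕ → Prop) :
    ∃ (b : Stream' ℕ) (v : Prop), ∀ x ∈ Hindman.FS b, 0 < x ∧ (Q x ↔ v) := by
  obtain ⟨c, hc, b, hb⟩ := Hindman.FS_partition_regular (Stream'.const 1)
    {{x | 0 < x ∧ Q x}, {x | 0 < x ∧ ¬Q x}} (Set.toFinite _) fun x hx => by
      have hx := Hindman.pos_of_mem_FS hx fun _ => Nat.one_pos
      by_cases hQ : Q x
      · exact ⟨_, Or.inl rfl, hx, hQ⟩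
      · exact ⟨_, Or.inr rfl, hx, hQ⟩
  rcases hc with rfl | rfl
  · exact ⟨b, True, fun x hx => ⟨(hb hx).1, iff_true_intro (hb hx).2⟩⟩
  · exact ⟨b, False, fun x hx => ⟨(hb hx).1, iff_false_intro (hb hx).2⟩⟩

namespace Tm

variable {F : ℕ → Type u}

def ofList (f : F 2) : List ℕ → Tm F
  | [] => var 0
  | [a] => var a
  | a :: b :: l => func f ![var a, ofList f (b :: l)]

theorem varList_ofList (f : F 2) : ∀ {l : List ℕ}, l ≠ [] → (ofList f l).varList = l
  | [], h => absurd rfl h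
  | [a], _ => rfl
  | a :: b :: l, _ => by
    simp [ofList, varList, List.finRange_succ, varList_ofList f (List.cons_ne_nil b l)]

theorem exists_admissible_forall_subst_iff [IsEmpty (F 0)] (f : F 2) {P : Tm F → Prop}
    (hP : ∀ t₁ t₂ : Tm F, t₁.Orderly → t₁.varList = t₂.varList → (P t₁ ↔ P t₂)) :
    ∃ ts, Admissible ts ∧ ∃ v : Prop, ∀ s : Tm F, s.Orderly → (P (s.subst ts) ↔ v) := by
  obtain ⟨b, v, hb⟩ := Hindman.exists_FS_pos_forall_iff fun x => P (ofList f x.bitIndices)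
  obtain ⟨D, hDsum, hDbits⟩ := exists_block_sums_bitIndices_lt b.get
  have hDFS {l : List ℕ} (hl : l ≠ []) (hnd : l.Nodup) : (l.map D).sum ∈ Hindman.FS b := by
    obtain ⟨t, ht, heq⟩ := hDsum l.toFinset (List.toFinset_nonempty_iff l |>.2 hl)
    rw [← List.sum_toFinset D hnd, heq]
    exact Hindman.FS.finsetSum b t ht
  let ts n := ofList f (D n).bitIndices
  have hvar (n : ℕ) : (ts n).varList = (D n).bitIndices := by
    refine varList_ofList f (Nat.bitIndices_ne_nil (hb _ ?_).1)
    simpa using hDFS (List.cons_ne_nil n []) (List.nodup_singleton n)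
  have hts : Admissible ts := by
    have hord (n : ℕ) : (ts n).Orderly := by
      rw [orderly_iff_pairwise, hvar]
      exact Nat.bitIndices_sorted.pairwise
    refine ⟨hord, fun n => (termLT_iff (hord n) (hord (n + 1))).2 ?_⟩
    rw [hvar, hvar]
    exact hDbits n (n + 1) n.lt_succ_self
  refine ⟨ts, hts, v, fun s hs => ?_⟩
  have hs' := orderly_iff_pairwise.1 hs
  obtain ⟨hx, hPx⟩ := hb _ (hDFS (varList_ne_nil s) hs'.nodup)
  refine (hP _ _ (hs.subst hts) ?_).trans hPx
  rw [varList_ofList f (Nat.bitIndices_ne_nil hx), Nat.bitIndices_sum_map (hs'.imp (hDbits _ _)),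
    varList_subst]
  simp only [hvar]

end Tm

theorem weakly_ramsey_iff_prehomogeneous_general {F : ℕ → Type u} [IsEmpty (F 0)]
    [Nonempty (F 2)] {β : Type w} (𝒜 : Tm F → β) :
    WeaklyRamseyOA 𝒜 ↔
      ∀ X ⊆ OAUniv 𝒜, ∃ ℬ, OAReduction ℬ 𝒜 ∧
        ∀ t₁ t₂ : Tm F, t₁.Orderly → t₂.Orderly →
          (∀ i, i ∈ t₁.varList ↔ i ∈ t₂.varList) → (ℬ t₁ ∈ X ↔ ℬ t₂ ∈ X) := by
  constructor
  · intro hWR X hX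
    obtain ⟨ℬ, hℬ, hhomog⟩ := hWR X hX
    exact ⟨ℬ, hℬ, fun t₁ t₂ h₁ h₂ _ => homog_iff.1 hhomog t₁ t₂ h₁ h₂⟩
  · intro hpre X hX
    obtain ⟨f⟩ := ‹Nonempty (F 2)›
    obtain ⟨ℬ, hℬ, hℬX⟩ := hpre X hX
    obtain ⟨ts, hts, v, hv⟩ := Tm.exists_admissible_forall_subst_iff f (P := (ℬ · ∈ X))
      fun t₁ t₂ h₁ hvar => hℬX t₁ t₂ h₁ (by rwa [Tm.Orderly, ← hvar]) (by simp [hvar])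
    refine ⟨fun s => ℬ (s.subst ts), OAReduction.trans ⟨ts, hts, fun _ _ => rfl⟩ hℬ, ?_⟩
    exact homog_iff.2 fun s t hs ht => (hv s hs).trans (hv t ht).symm

/-- For a language containing a binary function symbol, an
orderly algebra is weakly Ramsey iff for every `X ⊆ ‖𝒜‖` some reduction of
`𝒜` is pre-homogeneous for `X`. -/
theorem weakly_ramsey_iff_prehomogeneous {F : ℕ → Type u} [IsEmpty (F 0)]
    [Nonempty (F 2)] {β : Type w} (𝒜 : Tm F → β) (h𝒜 : IsOrderlyAlg 𝒜) :
    WeaklyRamseyOA 𝒜 ↔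
      ∀ X ⊆ OAUniv 𝒜, ∃ ℬ, OAReduction ℬ 𝒜 ∧
        ∀ t₁ t₂ : Tm F, t₁.Orderly → t₂.Orderly →
          (∀ i, i ∈ t₁.varList ↔ i ∈ t₂.varList) → (ℬ t₁ ∈ X ↔ ℬ t₂ ∈ X) :=
  weakly_ramsey_iff_prehomogeneous_general 𝒜
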